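/- Let d ≥ 2 and let F ∈ ℝ^{d×d} with det F > 0, and let κ, ρ ∈ (1,∞). Then the κ-th power of the outer distortion K^O(F) = |F|^d / det F satisfies the bound (K^O(F))^κ ≤ C_ρ ( |F|^{dκρ} + (det F)^{−κρ/(ρ−1)} ) for a constant C_ρ depending only on ρ. Consequently, if p > d(d−1) and r > p(d−1)/(p−d(d−1)), then for every y ∈ W^{1,p}_+(Ω,ℝ^d) on a bounded Lipschitz domain Ω with 𝓔(y) = ∫_Ω |∇y|^p + ∫_Ω (det∇y)^{−r} < ∞, the outer distortion K^O(∇y) belongs to L^κ(Ω) with κ = (1/r + d/p)^{−1}, and this κ satisfies κ > d−1. -/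

import Mathlib

open MeasureTheory Filter Topology
open scoped ENNReal NNReal RealInnerProductSpace Classical

noncomputable section

/-- Euclidean space `ℝ^d`. -/
abbrev Euc (d : ℕ) : Type := EuclideanSpace ℝ (Fin d)

/-- The boundary of `Ω` is locally the graph boundary of a Lipschitz subgraph:
near each boundary point there are a unit direction `u` and a Lipschitz function `f`,
constant in the direction `u`, such that `Ω` is locally `{z : ⟪z,u⟫ < f z}`. -/
def HasLipschitzBoundary {d : ℕ} (Ω : Set (Euc d)) : Prop :=
  ∀ x ∈ frontier Ω, ∃ (u : Euc d) (f : Euc d → ℝ) (K : ℝ≥0) (ε : ℝ),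
    ‖u‖ = 1 ∧ LipschitzWith K f ∧ 0 < ε ∧
    (∀ (z : Euc d) (t : ℝ), f (z + t • u) = f z) ∧
    (∀ z ∈ Metric.ball x ε, (z ∈ Ω ↔ ⟪z, u⟫ < f z))

/-- A bounded Lipschitz domain in `ℝ^d`. -/
def IsLipschitzDomain {d : ℕ} (Ω : Set (Euc d)) : Prop :=
  IsOpen Ω ∧ Bornology.IsBounded Ω ∧ IsConnected Ω ∧ HasLipschitzBoundary Ω

/-- `ℝ^d ∖ ∂Ω` has exactly two connected components. -/
def TwoComplementComponents {d : ℕ} (Ω : Set (Euc d)) : Prop :=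
  Nat.card (ConnectedComponents ((frontier Ω)ᶜ : Set (Euc d))) = 2

/-- `G` is the weak (distributional) derivative of `y` on the open set `Ω`,
in the sense of integration by parts against smooth compactly supported test functions. -/
def IsWeakDeriv {d : ℕ} {F : Type} [NormedAddCommGroup F] [NormedSpace ℝ F]
    (Ω : Set (Euc d)) (y : Euc d → F) (G : Euc d → Euc d →L[ℝ] F) : Prop :=
  LocallyIntegrableOn y Ω volume ∧ LocallyIntegrableOn G Ω volume ∧
  ∀ φ : Euc d → ℝ, ContDiff ℝ (⊤ : ℕ∞) φ → HasCompactSupport φ → tsupport φ ⊆ Ω →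
    ∀ v : Euc d, ∫ x in Ω, fderiv ℝ φ x v • y x = - ∫ x in Ω, φ x • G x v

/-- Membership in the Sobolev space `W^{1,p}(Ω;F)`, recorded together with
an explicit weak derivative `G`. -/
def MemW1p {d : ℕ} {F : Type} [NormedAddCommGroup F] [NormedSpace ℝ F]
    (Ω : Set (Euc d)) (p : ℝ) (y : Euc d → F) (G : Euc d → Euc d →L[ℝ] F) : Prop :=
  AEStronglyMeasurable y (volume.restrict Ω) ∧
  AEStronglyMeasurable G (volume.restrict Ω) ∧
  (∫⁻ x in Ω, (‖y x‖₊ : ℝ≥0∞) ^ p) < ⊤ ∧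
  (∫⁻ x in Ω, (‖G x‖₊ : ℝ≥0∞) ^ p) < ⊤ ∧
  IsWeakDeriv Ω y G

/-- Pointwise Jacobian determinant `det ∇y` of a gradient field `G`. -/
def jac {d : ℕ} (G : Euc d → Euc d →L[ℝ] Euc d) (x : Euc d) : ℝ :=
  LinearMap.det ((G x) : Euc d →ₗ[ℝ] Euc d)

/-- Membership in `W^{1,p}_+(Ω;ℝ^d)`: Sobolev regularity plus `det ∇y > 0` a.e. -/
def MemW1pPlus {d : ℕ} (Ω : Set (Euc d)) (p : ℝ)
    (y : Euc d → Euc d) (G : Euc d → Euc d →L[ℝ] Euc d) : Prop :=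
  MemW1p Ω p y G ∧ ∀ᵐ x ∂(volume.restrict Ω), 0 < jac G x

/-- The neo-Hookean elastic energy
`𝓔(y) = ∫_Ω |∇y|^p dx + ∫_Ω (det ∇y)^{-r} dx`,
with the convention that the second integrand is `+∞` where `det ∇y ≤ 0`. -/
def elastic {d : ℕ} (Ω : Set (Euc d)) (p r : ℝ)
    (G : Euc d → Euc d →L[ℝ] Euc d) : ℝ≥0∞ :=
  (∫⁻ x in Ω, (‖G x‖₊ : ℝ≥0∞) ^ p) +
  ∫⁻ x in Ω, (if 0 < jac G x then ENNReal.ofReal (jac G x ^ (-r)) else (⊤ : ℝ≥0∞))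

/-- The bulk self-repulsion functional
`𝓓_U(y) = ∬_{U×U} |x-x̃|^q |y(x)-y(x̃)|^{-(d+sq)} |det∇y(x)| |det∇y(x̃)| dx dx̃`.
(The `ℝ≥0∞`-division gives value `0` whenever the numerator vanishes and `+∞`
whenever `y(x) = y(x̃)` but the numerator is positive.) -/
def bulkRep {d : ℕ} (U : Set (Euc d)) (q s : ℝ)
    (y : Euc d → Euc d) (G : Euc d → Euc d →L[ℝ] Euc d) : ℝ≥0∞ :=
  ∫⁻ x in U, ∫⁻ x' in U,
    ENNReal.ofReal (‖x - x'‖ ^ q * |jac G x| * |jac G x'|) /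
      ENNReal.ofReal (‖y x - y x'‖ ^ ((d : ℝ) + s * q))

/-- The surface self-repulsion functional on a set `Γ` (typically `Γ = ∂Ω`),
`𝓓̃_Γ(y) = ∬_{Γ×Γ} |x-x̃|^q |y(x)-y(x̃)|^{-(d-1+sq)} dA(x) dA(x̃)`,
with respect to the `(d-1)`-dimensional Hausdorff measure. -/
def surfRep {d : ℕ} (Γ : Set (Euc d)) (q s : ℝ) (y : Euc d → Euc d) : ℝ≥0∞ :=
  ∫⁻ x in Γ, (∫⁻ x' in Γ,
    ENNReal.ofReal (‖x - x'‖ ^ q) /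
      ENNReal.ofReal (‖y x - y x'‖ ^ ((d : ℝ) - 1 + s * q)) ∂μH[(d : ℝ) - 1]) ∂μH[(d : ℝ) - 1]

/-- Surface self-repulsion of a Sobolev map, evaluated on the continuous
representative (on `closure Ω`) of `y`; `+∞` if no such representative exists. -/
def surfRepC {d : ℕ} (Ω : Set (Euc d)) (q s : ℝ) (y : Euc d → Euc d) : ℝ≥0∞ :=
  ⨅ yc ∈ {f : Euc d → Euc d | ContinuousOn f (closure Ω) ∧ f =ᵐ[volume.restrict Ω] y},
    surfRep (frontier Ω) q s yc

/-- The Ciarlet–Nečas condition `∫_Ω |det ∇y| dx = |y(Ω)|` for the given representative. -/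
def CiarletNecas {d : ℕ} (Ω : Set (Euc d)) (y : Euc d → Euc d)
    (G : Euc d → Euc d →L[ℝ] Euc d) : Prop :=
  (∫⁻ x in Ω, ENNReal.ofReal |jac G x|) = volume (y '' Ω)

/-- The Ciarlet–Nečas condition, evaluated on the continuous representative of `y` on `Ω`. -/
def CiarletNecasC {d : ℕ} (Ω : Set (Euc d)) (y : Euc d → Euc d)
    (G : Euc d → Euc d →L[ℝ] Euc d) : Prop :=
  ∃ yc : Euc d → Euc d, ContinuousOn yc Ω ∧ yc =ᵐ[volume.restrict Ω] y ∧ CiarletNecas Ω yc G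

/-- A test function for weak `L^p` convergence: a member of `L^{p'}(Ω)`, `p' = p/(p-1)`. -/
def ConjLpTest {d : ℕ} (Ω : Set (Euc d)) (p : ℝ) (g : Euc d → ℝ) : Prop :=
  AEStronglyMeasurable g (volume.restrict Ω) ∧
  (∫⁻ x in Ω, (‖g x‖₊ : ℝ≥0∞) ^ (p / (p - 1))) < ⊤

/-- Weak convergence `y_k ⇀ y` in `W^{1,p}(Ω;ℝ^m)`: the functions and their weak
gradients converge weakly in `L^p`, i.e. tested against arbitrary `L^{p'}` functions. -/
def WeakConvW1p {d m : ℕ} (Ω : Set (Euc d)) (p : ℝ)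
    (y : ℕ → Euc d → Euc m) (G : ℕ → Euc d → Euc d →L[ℝ] Euc m)
    (ylim : Euc d → Euc m) (Glim : Euc d → Euc d →L[ℝ] Euc m) : Prop :=
  (∀ g : Euc d → ℝ, ConjLpTest Ω p g → ∀ w : Euc m,
    Tendsto (fun k => ∫ x in Ω, g x * ⟪y k x, w⟫) atTop
      (𝓝 (∫ x in Ω, g x * ⟪ylim x, w⟫))) ∧
  (∀ g : Euc d → ℝ, ConjLpTest Ω p g → ∀ (v : Euc d) (w : Euc m),
    Tendsto (fun k => ∫ x in Ω, g x * ⟪G k x v, w⟫) atTop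
      (𝓝 (∫ x in Ω, g x * ⟪Glim x v, w⟫)))

/-- The regularized energy `E_ε = 𝓔 + ε 𝓓_U` on `W^{1,p}_+`, `+∞` elsewhere. -/
def Eeps {d : ℕ} (Ω U : Set (Euc d)) (p r q s ε : ℝ)
    (y : Euc d → Euc d) (G : Euc d → Euc d →L[ℝ] Euc d) : ℝ≥0∞ :=
  if MemW1pPlus Ω p y G then elastic Ω p r G + ENNReal.ofReal ε * bulkRep U q s y G
  else ⊤

/-- The regularized energy `E_ε = 𝓔 + ε 𝓓̃_{∂Ω}` on `W^{1,p}_+`, `+∞` elsewhere. -/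
def EepsSurf {d : ℕ} (Ω : Set (Euc d)) (p r q s ε : ℝ)
    (y : Euc d → Euc d) (G : Euc d → Euc d →L[ℝ] Euc d) : ℝ≥0∞ :=
  if MemW1pPlus Ω p y G then elastic Ω p r G + ENNReal.ofReal ε * surfRepC Ω q s y
  else ⊤

/-- The limit energy `E_0`: the elastic energy on maps of `W^{1,p}_+` satisfying
the Ciarlet–Nečas condition, `+∞` elsewhere. -/
def Elimit {d : ℕ} (Ω : Set (Euc d)) (p r : ℝ)
    (y : Euc d → Euc d) (G : Euc d → Euc d →L[ℝ] Euc d) : ℝ≥0∞ :=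
  if MemW1pPlus Ω p y G ∧ CiarletNecasC Ω y G then elastic Ω p r G else ⊤

/-- The Γ-liminf inequality (w.r.t. weak `W^{1,p}` convergence) for a sequence of
functionals `Fk` with candidate limit `F0`. -/
def GammaLiminf {d : ℕ} (Ω : Set (Euc d)) (p : ℝ)
    (Fk : ℕ → (Euc d → Euc d) → (Euc d → Euc d →L[ℝ] Euc d) → ℝ≥0∞)
    (F0 : (Euc d → Euc d) → (Euc d → Euc d →L[ℝ] Euc d) → ℝ≥0∞) : Prop :=
  ∀ (y : Euc d → Euc d) (G : Euc d → Euc d →L[ℝ] Euc d), MemW1p Ω p y G →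
    ∀ (yk : ℕ → Euc d → Euc d) (Gk : ℕ → Euc d → Euc d →L[ℝ] Euc d),
      (∀ k, MemW1p Ω p (yk k) (Gk k)) → WeakConvW1p Ω p yk Gk y G →
      F0 y G ≤ atTop.liminf fun k => Fk k (yk k) (Gk k)

/-- The Γ-limsup (recovery sequence) inequality (w.r.t. weak `W^{1,p}` convergence). -/
def GammaRecovery {d : ℕ} (Ω : Set (Euc d)) (p : ℝ)
    (Fk : ℕ → (Euc d → Euc d) → (Euc d → Euc d →L[ℝ] Euc d) → ℝ≥0∞)
    (F0 : (Euc d → Euc d) → (Euc d → Euc d →L[ℝ] Euc d) → ℝ≥0∞) : Prop :=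
  ∀ (y : Euc d → Euc d) (G : Euc d → Euc d →L[ℝ] Euc d), MemW1p Ω p y G →
    ∃ (yk : ℕ → Euc d → Euc d) (Gk : ℕ → Euc d → Euc d →L[ℝ] Euc d),
      (∀ k, MemW1p Ω p (yk k) (Gk k)) ∧ WeakConvW1p Ω p yk Gk y G ∧
      (atTop.limsup fun k => Fk k (yk k) (Gk k)) ≤ F0 y G

/-- Γ-convergence with respect to the weak topology of `W^{1,p}`. -/
def GammaConv {d : ℕ} (Ω : Set (Euc d)) (p : ℝ)
    (Fk : ℕ → (Euc d → Euc d) → (Euc d → Euc d →L[ℝ] Euc d) → ℝ≥0∞)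
    (F0 : (Euc d → Euc d) → (Euc d → Euc d →L[ℝ] Euc d) → ℝ≥0∞) : Prop :=
  GammaLiminf Ω p Fk F0 ∧ GammaRecovery Ω p Fk F0

/-! Writing `K^O(F)^κ = |F|^{dκ} · (det F)^{-κ}`, Young's inequality with the conjugate
exponents `ρ` and `ρ / (ρ - 1)` gives the pointwise bound with `C_ρ = 1`. For `∇y`, the choice
`ρ = 1 + p / (d r)` turns the two exponents into exactly `p` and `r`, so `∫ K^O(∇y)^κ` is at most
the elastic energy; `κ > d - 1` is elementary algebra in `p` and `r`. -/

theorem Real.div_rpow_le_rpow_add_rpow {a b ρ : ℝ} (ha : 0 ≤ a) (hb : 0 ≤ b) (hρ : 1 < ρ)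
    (κ : ℝ) : (a / b) ^ κ ≤ a ^ (κ * ρ) + b ^ (-(κ * ρ / (ρ - 1))) := by
  have hconj : ρ.HolderConjugate (ρ / (ρ - 1)) := Real.HolderConjugate.conjExponent hρ
  have haκ : 0 ≤ a ^ κ := Real.rpow_nonneg ha κ
  have hbκ : 0 ≤ b ^ (-κ) := Real.rpow_nonneg hb _
  calc (a / b) ^ κ = a ^ κ * b ^ (-κ) := by
        rw [Real.div_rpow ha hb, Real.rpow_neg hb, div_eq_mul_inv]
    _ ≤ (a ^ κ) ^ ρ / ρ + (b ^ (-κ)) ^ (ρ / (ρ - 1)) / (ρ / (ρ - 1)) :=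
        Real.young_inequality_of_nonneg haκ hbκ hconj
    _ ≤ (a ^ κ) ^ ρ + (b ^ (-κ)) ^ (ρ / (ρ - 1)) :=
        add_le_add (div_le_self (Real.rpow_nonneg haκ _) hρ.le)
          (div_le_self (Real.rpow_nonneg hbκ _) hconj.symm.lt.le)
    _ = a ^ (κ * ρ) + b ^ (-(κ * ρ / (ρ - 1))) := by
        rw [← Real.rpow_mul ha, ← Real.rpow_mul hb, neg_mul, mul_div_assoc]

theorem Real.rpow_div_rpow_le_rpow_add_rpow_neg {a b n p r : ℝ} (ha : 0 ≤ a) (hb : 0 ≤ b)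
    (hn : 0 < n) (hp : 0 < p) (hr : 0 < r) :
    (a ^ n / b) ^ (1 / r + n / p)⁻¹ ≤ a ^ p + b ^ (-r) := by
  have hρ : 1 < 1 + p / (n * r) := lt_add_of_pos_right 1 (by positivity)
  have hprimal : n * ((1 / r + n / p)⁻¹ * (1 + p / (n * r))) = p := by
    rw [div_add_div _ _ hr.ne' hp.ne', one_add_div (by positivity), inv_div]
    field_simp
    ring
  have hdual : (1 / r + n / p)⁻¹ * (1 + p / (n * r)) / (1 + p / (n * r) - 1) = r := by
    rw [add_sub_cancel_left, div_add_div _ _ hr.ne' hp.ne', one_add_div (by positivity), inv_div]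
    field_simp
    ring
  have h := Real.div_rpow_le_rpow_add_rpow (Real.rpow_nonneg ha n) hb hρ (1 / r + n / p)⁻¹
  rwa [← Real.rpow_mul ha, hprimal, hdual] at h

theorem sub_one_lt_inv_one_div_add_div {n p r : ℝ} (hn : 1 < n) (hp : n * (n - 1) < p)
    (hr : p * (n - 1) / (p - n * (n - 1)) < r) : n - 1 < (1 / r + n / p)⁻¹ := by
  have hn1 : 0 < n - 1 := sub_pos.mpr hn
  have hgap : 0 < p - n * (n - 1) := sub_pos.mpr hp
  have hp0 : 0 < p := lt_of_le_of_lt (by positivity) hp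
  have hr0 : 0 < r := lt_of_le_of_lt (by positivity) hr
  have hinv_r : 1 / r < (p - n * (n - 1)) / (p * (n - 1)) := by
    simpa only [one_div_div] using one_div_lt_one_div_of_lt (by positivity) hr
  have hsum : 1 / r + n / p < (n - 1)⁻¹ := by
    calc 1 / r + n / p < (p - n * (n - 1)) / (p * (n - 1)) + n / p := by gcongr
      _ = (n - 1)⁻¹ := by field_simp; ring
  simpa using inv_strictAnti₀ (by positivity) hsum

theorem lintegral_outerDistortion_rpow_le_elastic {d : ℕ} {Ω : Set (Euc d)} {p r : ℝ}
    {G : Euc d → Euc d →L[ℝ] Euc d} (hd : 0 < d) (hp : 0 < p) (hr : 0 < r)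
    (hG : AEStronglyMeasurable G (volume.restrict Ω))
    (hjac : ∀ᵐ x ∂(volume.restrict Ω), 0 < jac G x) :
    ∫⁻ x in Ω, ENNReal.ofReal ((‖G x‖ ^ (d : ℝ) / jac G x) ^ (1 / r + (d : ℝ) / p)⁻¹) ≤
      elastic Ω p r G := by
  have hGp : AEMeasurable (fun x => (‖G x‖₊ : ℝ≥0∞) ^ p) (volume.restrict Ω) :=
    hG.enorm.pow_const p
  rw [elastic, ← lintegral_add_left' hGp]
  refine lintegral_mono_ae ?_
  filter_upwards [hjac] with x hx
  rw [if_pos hx, ← enorm_eq_nnnorm, ← ofReal_norm,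
    ENNReal.ofReal_rpow_of_nonneg (norm_nonneg _) hp.le,
    ← ENNReal.ofReal_add (Real.rpow_nonneg (norm_nonneg _) _) (Real.rpow_nonneg hx.le _)]
  exact ENNReal.ofReal_le_ofReal <| Real.rpow_div_rpow_le_rpow_add_rpow_neg (norm_nonneg _)
    hx.le (by exact_mod_cast hd) hp hr

/-- **Outer distortion bound (from the proof of `prop:homeo`).** For `d ≥ 2`:
(i) for every `ρ > 1` there is a constant `C_ρ > 0` depending only on `ρ` such that
for every `κ > 1` and every `F ∈ ℝ^{d×d}` with `det F > 0`, the outer distortion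
`K^O(F) = |F|^d / det F` satisfies
`(K^O(F))^κ ≤ C_ρ (|F|^{dκρ} + (det F)^{-κρ/(ρ-1)})`;
(ii) consequently, if `p > d(d-1)` and `r > p(d-1)/(p-d(d-1))`, then for every
`y ∈ W^{1,p}_+(Ω,ℝ^d)` on a bounded Lipschitz domain `Ω` with `𝓔(y) < ∞`, the outer
distortion `K^O(∇y)` lies in `L^κ(Ω)` with `κ = (1/r + d/p)⁻¹`, and `κ > d - 1`. -/
theorem outer_distortion_bound_and_integrability {d : ℕ} (hd : 2 ≤ d) :
    (∀ ρ : ℝ, 1 < ρ → ∃ C : ℝ, 0 < C ∧ ∀ κ : ℝ, 1 < κ →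
      ∀ F : Euc d →L[ℝ] Euc d, 0 < LinearMap.det (F : Euc d →ₗ[ℝ] Euc d) →
        (‖F‖ ^ (d : ℝ) / LinearMap.det (F : Euc d →ₗ[ℝ] Euc d)) ^ κ ≤
          C * (‖F‖ ^ ((d : ℝ) * κ * ρ) +
            LinearMap.det (F : Euc d →ₗ[ℝ] Euc d) ^ (-(κ * ρ / (ρ - 1))))) ∧
    (∀ (Ω : Set (Euc d)), IsLipschitzDomain Ω →
      ∀ p r : ℝ, (d : ℝ) * ((d : ℝ) - 1) < p →
        p * ((d : ℝ) - 1) / (p - (d : ℝ) * ((d : ℝ) - 1)) < r →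
      ∀ (y : Euc d → Euc d) (G : Euc d → Euc d →L[ℝ] Euc d),
        MemW1pPlus Ω p y G → elastic Ω p r G < ⊤ →
        ((d : ℝ) - 1 < (1 / r + (d : ℝ) / p)⁻¹ ∧
          (∫⁻ x in Ω, ENNReal.ofReal
            ((‖G x‖ ^ (d : ℝ) / jac G x) ^ ((1 / r + (d : ℝ) / p)⁻¹))) < ⊤)) := by
  have hd' : (1 : ℝ) < d := by exact_mod_cast hd
  refine ⟨fun ρ hρ => ⟨1, one_pos, fun κ _ F hF => ?_⟩, ?_⟩
  · calc _ ≤ (‖F‖ ^ (d : ℝ)) ^ (κ * ρ) + _ :=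
          Real.div_rpow_le_rpow_add_rpow (Real.rpow_nonneg (norm_nonneg F) _) hF.le hρ κ
      _ = _ := by rw [one_mul, ← Real.rpow_mul (norm_nonneg F), mul_assoc]
  intro Ω _ p r hp hr y G hy hE
  have hp0 : 0 < p := lt_of_le_of_lt (by positivity) hp
  have hr0 : 0 < r := lt_of_le_of_lt (div_nonneg (by positivity) (by linarith)) hr
  exact ⟨sub_one_lt_inv_one_div_add_div hd' hp hr,
    (lintegral_outerDistortion_rpow_le_elastic (by omega) hp0 hr0 hy.1.2.1 hy.2).trans_lt hE⟩
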